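/- Let d ≥ 4 and s = (1, q_1, …, q_{d−1}) with 1 > q_1 > q_2 > … > q_{d−1} > 0. Define the d×d matrix T by: column 0 equals (1−q_1, q_1−q_2, …, q_{d−2}−q_{d−1}, q_{d−1})^T, and for 1 ≤ j ≤ d−1 column j is the standard basis vector e_{j−1}. Then T ∈ TP(d,s), T is an extreme point of TP(d,s), and T is not biplanar: for every pair of permutations (π_in, π_out) of {0,…,d−1}, there exist two distinct nonzero entries of the transportation matrix T·diag(s) that cross with respect to (π_in, π_out). -/

import Mathlib

/-- The set of thermal processes. -/
def TP (d : ℕ) (s : Fin d → ℝ) : Set (Matrix (Fin d) (Fin d) ℝ) :=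
  {T | (∀ i j, 0 ≤ T i j) ∧ (∀ j, ∑ i, T i j = 1) ∧
    T.mulVec (fun i => s i / ∑ k, s k) = (fun i => s i / ∑ k, s k)}

/-- The transportation polytope `T(r,c)`. -/
def TransportPolytope (m n : ℕ) (r : Fin m → ℝ) (c : Fin n → ℝ) :
    Set (Matrix (Fin m) (Fin n) ℝ) :=
  {M | (∀ i j, 0 ≤ M i j) ∧ (∀ i, ∑ j, M i j = r i) ∧ (∀ j, ∑ i, M i j = c j)}

/-- The non-biplanar matrix `T`: column `0` is `(s₀−s₁, s₁−s₂, …, s_{d−2}−s_{d−1},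
s_{d−1})ᵀ` and column `j`, for `j ≥ 1`, is the standard basis vector `e_{j−1}`.
(With `s₀ = 1` and `s = (1, q₁, …, q_{d−1})`, column `0` reads
`(1−q₁, q₁−q₂, …, q_{d−2}−q_{d−1}, q_{d−1})ᵀ`.) -/
def Tnb (d : ℕ) (s : Fin d → ℝ) : Matrix (Fin d) (Fin d) ℝ :=
  Matrix.of fun i j =>
    if (j : ℕ) = 0 then
      (if h : (i : ℕ) + 1 < d then s i - s ⟨(i : ℕ) + 1, h⟩ else s i)
    else if (i : ℕ) + 1 = (j : ℕ) then 1 else 0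

/-!
Column `j ≥ 1` of `Tnb` is the unit vector `e_{j-1}`; for a thermal process supported inside the
support of `Tnb`, these columns are forced by the column sums, and then column `0` is forced by
`T g = g` since `g₀ ≠ 0`. Hence `Tnb` is the only thermal process with its support, which makes it
extreme. In `Tnb · diag(s)` column `0` is entirely nonzero and each row `i < d - 1` also has a
nonzero entry in column `i + 1`. Among rows `0, 1, 2`, the one that `π_out` puts in the middle has
its second entry crossing the column-`0` entry of one of the other two, whichever side of
column `0` `π_in` puts it.
-/

open Finset Matrix

theorem Finset.exists_lt_lt_of_two_lt_card {α β : Type*} [LinearOrder β] {f : α → β}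
    (hf : Function.Injective f) {S : Finset α} (hS : 2 < S.card) :
    ∃ a ∈ S, ∃ b ∈ S, ∃ c ∈ S, f a < f b ∧ f b < f c := by
  obtain ⟨x, hx, y, hy, z, hz, hxy, hxz, hyz⟩ := two_lt_card.1 hS
  rcases (hf.ne hxy).lt_or_gt with h₁ | h₁ <;> rcases (hf.ne hxz).lt_or_gt with h₂ | h₂ <;>
    rcases (hf.ne hyz).lt_or_gt with h₃ | h₃
  all_goals first
    | exact ⟨x, hx, y, hy, z, hz, ‹_›, ‹_›⟩
    | exact ⟨x, hx, z, hz, y, hy, ‹_›, ‹_›⟩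
    | exact ⟨y, hy, x, hx, z, hz, ‹_›, ‹_›⟩
    | exact ⟨y, hy, z, hz, x, hx, ‹_›, ‹_›⟩
    | exact ⟨z, hz, x, hx, y, hy, ‹_›, ‹_›⟩
    | exact ⟨z, hz, y, hy, x, hx, ‹_›, ‹_›⟩

theorem Fin.sum_castSucc_sub_succ {M : Type*} [AddCommGroup M] {n : ℕ} (f : Fin (n + 1) → M) :
    ∑ k : Fin n, (f k.castSucc - f k.succ) = f 0 - f (Fin.last n) := by
  rw [sum_sub_distrib, sub_eq_sub_iff_add_eq_add, ← Fin.sum_univ_castSucc, Fin.sum_univ_succ]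

theorem Matrix.eq_of_mulVec_eq_of_forall_ne {m n R : Type*} [Fintype n] [DecidableEq n] [Ring R]
    [IsDomain R]
    {A B : Matrix m n R} {v : n → R} (j₀ : n) (hv : v j₀ ≠ 0) (hAB : A *ᵥ v = B *ᵥ v)
    (hcol : ∀ i j, j ≠ j₀ → A i j = B i j) : A = B := by
  ext i j
  by_cases hj : j = j₀
  · subst hj
    have h := congrFun hAB i
    simp only [mulVec, dotProduct] at h
    rw [← add_sum_erase _ _ (mem_univ j), ← add_sum_erase _ _ (mem_univ j),
      sum_congr rfl fun k hk => by rw [hcol i k (ne_of_mem_erase hk)]] at h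
    exact mul_right_cancel₀ hv (add_right_cancel h)
  · exact hcol i j hj

theorem Matrix.mem_extremePoints_of_forall_eq {m n : Type*} {S : Set (Matrix m n ℝ)}
    {X : Matrix m n ℝ} (hS : ∀ A ∈ S, ∀ i j, 0 ≤ A i j) (hX : X ∈ S)
    (huniq : ∀ A ∈ S, (∀ i j, X i j = 0 → A i j = 0) → A = X) :
    X ∈ Set.extremePoints ℝ S := by
  refine mem_extremePoints_iff_left.2 ⟨hX, ?_⟩
  rintro A hA B hB ⟨a, b, ha, hb, -, rfl⟩
  refine huniq A hA fun i j hij => ?_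
  have hsum : a * A i j + b * B i j = 0 := hij
  have := (add_eq_zero_iff_of_nonneg (mul_nonneg ha.le (hS A hA i j))
    (mul_nonneg hb.le (hS B hB i j))).1 hsum
  exact (mul_eq_zero.1 this.1).resolve_left ha.ne'

/-- `M` is biplanar with orders `(πin, πout)` iff `¬ HasCrossing M πin πout`. -/
def HasCrossing {m n : ℕ} {R : Type*} [Zero R] (M : Matrix (Fin m) (Fin n) R)
    (πin : Equiv.Perm (Fin n)) (πout : Equiv.Perm (Fin m)) : Prop :=
  ∃ i i' j j', (i, j) ≠ (i', j') ∧ M i j ≠ 0 ∧ M i' j' ≠ 0 ∧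
    (((πout.symm i : Fin m) : ℤ) - ((πout.symm i' : Fin m) : ℤ)) *
      (((πin.symm j : Fin n) : ℤ) - ((πin.symm j' : Fin n) : ℤ)) < 0

section Crossing

variable {m n : ℕ} {R : Type*} [Zero R] {M : Matrix (Fin m) (Fin n) R}
  {πin : Equiv.Perm (Fin n)} {πout : Equiv.Perm (Fin m)}

theorem hasCrossing_of_lt_of_lt {a b c : Fin m} {j₀ j : Fin n} (hj : j ≠ j₀)
    (ha : M a j₀ ≠ 0) (hb : M b j ≠ 0) (hc : M c j₀ ≠ 0)
    (hab : ((πout.symm a : Fin m) : ℤ) < (πout.symm b : Fin m))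
    (hbc : ((πout.symm b : Fin m) : ℤ) < (πout.symm c : Fin m)) :
    HasCrossing M πin πout := by
  have hne : ((πin.symm j : Fin n) : ℤ) ≠ (πin.symm j₀ : Fin n) := by
    simpa [Fin.val_inj] using hj
  rcases hne.lt_or_gt with hlt | hgt
  · exact ⟨b, a, j, j₀, by simp [hj], hb, ha, mul_neg_of_pos_of_neg (by omega) (by omega)⟩
  · exact ⟨b, c, j, j₀, by simp [hj], hb, hc, mul_neg_of_neg_of_pos (by omega) (by omega)⟩

theorem hasCrossing_of_two_lt_card (j₀ : Fin n) {S : Finset (Fin m)} (hS : 2 < S.card)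
    (hrows : ∀ i ∈ S, M i j₀ ≠ 0 ∧ ∃ j ≠ j₀, M i j ≠ 0) : HasCrossing M πin πout := by
  have hinj : Function.Injective fun i => ((πout.symm i : Fin m) : ℤ) :=
    Nat.cast_injective.comp (Fin.val_injective.comp πout.symm.injective)
  obtain ⟨a, ha, b, hb, c, hc, hab, hbc⟩ := Finset.exists_lt_lt_of_two_lt_card hinj hS
  obtain ⟨j, hj, hbj⟩ := (hrows b hb).2
  exact hasCrossing_of_lt_of_lt hj (hrows a ha).1 hbj (hrows c hc).1 hab hbc

end Crossing

section Tnb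

variable {n : ℕ} {s : Fin (n + 1) → ℝ}

theorem Tnb_castSucc_zero (k : Fin n) : Tnb (n + 1) s k.castSucc 0 = s k.castSucc - s k.succ := by
  rw [Tnb, of_apply, if_pos (Fin.val_zero _), dif_pos (by simp)]
  rfl

theorem Tnb_last_zero : Tnb (n + 1) s (Fin.last n) 0 = s (Fin.last n) := by
  simp [Tnb]

theorem Tnb_apply_succ (i : Fin (n + 1)) (k : Fin n) :
    Tnb (n + 1) s i k.succ = if i = k.castSucc then 1 else 0 := by
  rw [Tnb, of_apply, if_neg (by simp)]
  simp only [Fin.ext_iff, Fin.val_succ, Fin.val_castSucc, add_left_inj]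

theorem Tnb_zero_pos (hanti : StrictAnti s) (hpos : ∀ i, 0 < s i) (i : Fin (n + 1)) :
    0 < Tnb (n + 1) s i 0 := by
  induction i using Fin.lastCases with
  | last => simpa [Tnb_last_zero] using hpos _
  | cast k => simpa [Tnb_castSucc_zero] using hanti k.castSucc_lt_succ

theorem Tnb_nonneg (hanti : StrictAnti s) (hpos : ∀ i, 0 < s i) (i j : Fin (n + 1)) :
    0 ≤ Tnb (n + 1) s i j := by
  induction j using Fin.cases with
  | zero => exact (Tnb_zero_pos hanti hpos i).le
  | succ k => rw [Tnb_apply_succ]; split_ifs <;> norm_num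

theorem sum_Tnb_apply (hs0 : s 0 = 1) (j : Fin (n + 1)) : ∑ i, Tnb (n + 1) s i j = 1 := by
  induction j using Fin.cases with
  | zero =>
    simp only [Fin.sum_univ_castSucc, Tnb_castSucc_zero, Tnb_last_zero,
      Fin.sum_castSucc_sub_succ]
    simp [hs0]
  | succ k => simp [Tnb_apply_succ]

theorem Tnb_mulVec_self (hs0 : s 0 = 1) : Tnb (n + 1) s *ᵥ s = s := by
  ext i
  simp only [mulVec, dotProduct, Fin.sum_univ_succ, Tnb_apply_succ, ite_mul, one_mul, zero_mul,
    hs0, mul_one]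
  induction i using Fin.lastCases with
  | last => simp [Tnb_last_zero, (Fin.castSucc_lt_last _).ne']
  | cast k => simp [Tnb_castSucc_zero]

theorem Tnb_mem_TP (hanti : StrictAnti s) (hpos : ∀ i, 0 < s i) (hs0 : s 0 = 1) :
    Tnb (n + 1) s ∈ TP (n + 1) s := by
  refine ⟨Tnb_nonneg hanti hpos, sum_Tnb_apply hs0, ?_⟩
  have hg : (fun i => s i / ∑ k, s k) = (∑ k, s k)⁻¹ • s := by
    ext i
    simp [div_eq_inv_mul]
  rw [hg, mulVec_smul, Tnb_mulVec_self hs0]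

theorem eq_Tnb_of_mem_TP (hanti : StrictAnti s) (hpos : ∀ i, 0 < s i) (hs0 : s 0 = 1)
    {A : Matrix (Fin (n + 1)) (Fin (n + 1)) ℝ} (hA : A ∈ TP (n + 1) s)
    (hsupp : ∀ i j, Tnb (n + 1) s i j = 0 → A i j = 0) : A = Tnb (n + 1) s := by
  have hZ : 0 < ∑ k, s k := sum_pos (fun i _ => hpos i) univ_nonempty
  refine eq_of_mulVec_eq_of_forall_ne 0 (div_pos (hpos 0) hZ).ne'
    (hA.2.2.trans (Tnb_mem_TP hanti hpos hs0).2.2.symm) fun i j hj => ?_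
  obtain ⟨k, rfl⟩ := Fin.exists_succ_eq.2 hj
  have hoff : ∀ i, i ≠ k.castSucc → A i k.succ = 0 := fun i hi =>
    hsupp i k.succ (by simp [Tnb_apply_succ, hi])
  rw [Tnb_apply_succ]
  split_ifs with hi
  · rw [hi, ← hA.2.1 k.succ, sum_eq_single_of_mem _ (mem_univ _) fun i _ => hoff i]
  · exact hoff i hi

theorem Tnb_mem_extremePoints_TP (hanti : StrictAnti s) (hpos : ∀ i, 0 < s i) (hs0 : s 0 = 1) :
    Tnb (n + 1) s ∈ Set.extremePoints ℝ (TP (n + 1) s) :=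
  mem_extremePoints_of_forall_eq (fun _ hA => hA.1) (Tnb_mem_TP hanti hpos hs0)
    fun _ hA hsupp => eq_Tnb_of_mem_TP hanti hpos hs0 hA hsupp

theorem hasCrossing_Tnb_mul_diagonal (hn : 2 < n) (hanti : StrictAnti s) (hpos : ∀ i, 0 < s i)
    (πin πout : Equiv.Perm (Fin (n + 1))) :
    HasCrossing (Tnb (n + 1) s * diagonal s) πin πout := by
  refine hasCrossing_of_two_lt_card 0 (S := univ.map Fin.castSuccEmb) (by simpa using hn) ?_
  simp only [mem_map, mem_univ, true_and, Fin.coe_castSuccEmb, forall_exists_index,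
    forall_apply_eq_imp_iff, mul_diagonal]
  refine fun k => ⟨(mul_pos (Tnb_zero_pos hanti hpos _) (hpos 0)).ne', k.succ, k.succ_ne_zero, ?_⟩
  simpa [Tnb_apply_succ] using (hpos k.succ).ne'

end Tnb

/-- for `d ≥ 4` and `s = (1, q₁, …, q_{d−1})` with
`1 > q₁ > … > q_{d−1} > 0`, the matrix `Tnb d s` is a thermal process, it is an
extreme point of `TP(d,s)`, and it is not biplanar: for every pair of permutations
`(π_in, π_out)` there are two distinct nonzero entries of the transportation matrix
`T · diag(s)` that cross with respect to `(π_in, π_out)`. -/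
theorem stmt18 (d : ℕ) (hd : 4 ≤ d) (s : Fin d → ℝ)
    (hs0 : s ⟨0, by omega⟩ = 1) (hanti : StrictAnti s) (hpos : ∀ i, 0 < s i) :
    Tnb d s ∈ TP d s ∧
    Tnb d s ∈ Set.extremePoints ℝ (TP d s) ∧
    ∀ πin πout : Equiv.Perm (Fin d),
      ∃ i i' j j' : Fin d, (i, j) ≠ (i', j') ∧
        (Tnb d s * Matrix.diagonal s) i j ≠ 0 ∧
        (Tnb d s * Matrix.diagonal s) i' j' ≠ 0 ∧
        (((πout.symm i : Fin d) : ℤ) - ((πout.symm i' : Fin d) : ℤ)) *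
          (((πin.symm j : Fin d) : ℤ) - ((πin.symm j' : Fin d) : ℤ)) < 0 := by
  obtain ⟨n, rfl⟩ : ∃ n, d = n + 1 := ⟨d - 1, by omega⟩
  exact ⟨Tnb_mem_TP hanti hpos hs0, Tnb_mem_extremePoints_TP hanti hpos hs0,
    hasCrossing_Tnb_mul_diagonal (by omega) hanti hpos⟩
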